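/- arXiv:math/0106188 — 2 statements merged into one kernel-verified Lean document; each statement's English description precedes it below -/
import Mathlib

section
/- Let X be a CAT(1) space, x and y points with d(x,y) = π, and let v₁, v₂ be two directions at x. Suppose γ^{v₁}, γ^{v₂} : [0,π] → X are geodesics from x to y with initial directions v₁, v₂ respectively, and suppose the angle between v₁ and v₂ at x is α. Then for all t ∈ [0,π], d(γ^{v₁}(t), γ^{v₂}(t)) ≤ the distance between the corresponding points on a spherical digon of angle α joining antipodal points in S². -/
open Real Set Metric

noncomputable section

/-- `γ` restricted to the parameter set `s` is an isometric (unit-speed) embedding. -/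
def IsGeodesicOn {X : Type*} [MetricSpace X] (γ : ℝ → X) (s : Set ℝ) : Prop :=
  ∀ a ∈ s, ∀ b ∈ s, dist (γ a) (γ b) = |a - b|

/-- A geodesic segment parametrized on `[a,b]` from `x` to `y`. -/
def IsGeodesicSeg {X : Type*} [MetricSpace X] (γ : ℝ → X) (a b : ℝ) (x y : X) : Prop :=
  IsGeodesicOn γ (Set.Icc a b) ∧ γ a = x ∧ γ b = y

/-- A local geodesic parametrized on `[a,b]`. -/
def IsLocalGeodesic {X : Type*} [MetricSpace X] (γ : ℝ → X) (a b : ℝ) : Prop :=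
  ∀ t ∈ Set.Icc a b, ∃ ε > 0, IsGeodesicOn γ (Set.Icc (t - ε) (t + ε) ∩ Set.Icc a b)

/-- Any two points are joined by a geodesic. -/
def GeodesicSpace (X : Type*) [MetricSpace X] : Prop :=
  ∀ x y : X, ∃ γ : ℝ → X, IsGeodesicSeg γ 0 (dist x y) x y

/-- The distance in the unit 2-sphere from the vertex `P̄` of a spherical comparison
triangle with side lengths `a = d(Q,R)`, `b = d(R,P)`, `c = d(P,Q)` to the point at
arclength `t` along the side `Q̄R̄` (spherical law of cosines). -/
def sphCompDist (a b c t : ℝ) : ℝ :=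
  Real.arccos (Real.cos c * Real.cos t +
    Real.sin c * Real.sin t *
      ((Real.cos b - Real.cos a * Real.cos c) / (Real.sin a * Real.sin c)))

/-- CAT(1): distances < π are realized by geodesics, and geodesic triangles of
perimeter < 2π are at least as thin as their comparison triangles in the unit sphere. -/
def IsCAT1 (X : Type*) [MetricSpace X] : Prop :=
  (∀ x y : X, dist x y < π → ∃ γ : ℝ → X, IsGeodesicSeg γ 0 (dist x y) x y) ∧
  ∀ (p q r : X) (γ : ℝ → X), IsGeodesicSeg γ 0 (dist q r) q r →
    dist p q + dist q r + dist r p < 2 * π →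
    ∀ t ∈ Set.Icc (0:ℝ) (dist q r),
      dist p (γ t) ≤ sphCompDist (dist q r) (dist r p) (dist p q) t

/-- CAT(0): geodesic space satisfying the CN (midpoint) comparison inequality. -/
def IsCAT0 (X : Type*) [MetricSpace X] : Prop :=
  GeodesicSpace X ∧
  ∀ p q r m : X, dist q m = dist q r / 2 → dist m r = dist q r / 2 →
    dist p m ^ 2 ≤ (dist p q ^ 2 + dist p r ^ 2) / 2 - dist q r ^ 2 / 4

/-- Euclidean comparison angle at `x` of the points `p`, `q`. -/
def compAngle {X : Type*} [MetricSpace X] (x p q : X) : ℝ :=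
  Real.arccos ((dist x p ^ 2 + dist x q ^ 2 - dist p q ^ 2) / (2 * dist x p * dist x q))

/-- The Alexandrov (upper) angle at `x` between two curves `γ`, `σ` emanating from `x`
(parametrized with `γ 0 = σ 0 = x`). -/
def alexAngle {X : Type*} [MetricSpace X] (x : X) (γ σ : ℝ → X) : ℝ :=
  ⨅ ε : {ε : ℝ // 0 < ε}, ⨆ s ∈ Set.Ioc (0:ℝ) ε.1, ⨆ t ∈ Set.Ioc (0:ℝ) ε.1,
    compAngle x (γ s) (σ t)

/-- Distance between the points of parameter `t` on the two sides of a spherical digon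
of angle `α` joining antipodal points of the unit 2-sphere. -/
noncomputable def digonDist (α t : ℝ) : ℝ :=
  Real.arccos (Real.cos t ^ 2 + Real.sin t ^ 2 * Real.cos α)


/-!
Measure angles at `y` by spherical comparison triangles. Since `d(x, y) = π`, the comparison
angle at `y` of a triangle `(y, γ s, p)` with `d(x, γ s) = s`, `d(x, p) = w` has cosine
`(cos d(γ s, p) - cos s cos w) / (sin s sin w)`, and CAT(1) comparison for this triangle says
exactly that this cosine does not decrease as `γ s` moves towards `y`. Applying this once along
`γ₂` and once along `γ₁` bounds the comparison angle of `(γ₁ t, γ₂ t)` by that of `(γ₁ s, γ₂ s)`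
for every small `s`. As `s → 0`, spherical and Euclidean comparison angles at `x` agree to first
order, so the latter is at most the Alexandrov angle `α` in the limit, and the spherical law of
cosines for the angle `α` is the digon distance.
-/

open Filter Topology

/-- The cosine of the angle between the sides of lengths `a` and `b` of a spherical triangle
whose third side has length `c` (spherical law of cosines). -/
def sphAngleCos (a b c : ℝ) : ℝ :=
  (cos c - cos a * cos b) / (sin a * sin b)

lemma sphAngleCos_comm (a b c : ℝ) : sphAngleCos a b c = sphAngleCos b a c := by
  rw [sphAngleCos, sphAngleCos, mul_comm (cos a), mul_comm (sin a)]

lemma sphAngleCos_pi_sub_pi_sub (a b c : ℝ) :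
    sphAngleCos (π - a) (π - b) c = sphAngleCos a b c := by
  simp only [sphAngleCos, cos_pi_sub, sin_pi_sub, neg_mul_neg]

lemma le_sphAngleCos_iff {a b c k : ℝ} (h : 0 < sin a * sin b) :
    k ≤ sphAngleCos a b c ↔ cos a * cos b + sin a * sin b * k ≤ cos c := by
  rw [sphAngleCos, le_div_iff₀ h]
  constructor <;> intro <;> linarith

lemma sphAngleCos_le_iff {a b c k : ℝ} (h : 0 < sin a * sin b) :
    sphAngleCos a b c ≤ k ↔ cos c ≤ cos a * cos b + sin a * sin b * k := by
  rw [sphAngleCos, div_le_iff₀ h]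
  constructor <;> intro <;> linarith

lemma sphAngleCos_add_self {a b : ℝ} (h : sin a * sin b ≠ 0) : sphAngleCos a b (a + b) = -1 := by
  rw [sphAngleCos, cos_add, div_eq_iff h]
  ring

lemma Real.cos_le_cos_of_le_of_le_two_pi_sub {a d : ℝ} (hd : 0 ≤ d) (hda : d ≤ a)
    (hda' : d ≤ 2 * π - a) : cos a ≤ cos d := by
  rcases le_total a π with ha | ha
  · exact cos_le_cos_of_nonneg_of_le_pi hd ha hda
  · rw [← cos_two_pi_sub]
    exact cos_le_cos_of_nonneg_of_le_pi hd (by linarith) hda'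

lemma Real.le_cos_of_le_arccos {d e : ℝ} (hd : 0 ≤ d) (h : d ≤ arccos e) (he : e ≤ 1) :
    e ≤ cos d := by
  rcases le_or_gt (-1) e with he' | he'
  · calc e = cos (arccos e) := (cos_arccos he' he).symm
      _ ≤ cos d := cos_le_cos_of_nonneg_of_le_pi hd (arccos_le_pi e) h
  · linarith [neg_one_le_cos d]

lemma Real.cos_le_of_arccos_le {b e : ℝ} (h : arccos e ≤ b) (hb : b ≤ π) (he : -1 ≤ e) :
    cos b ≤ e := by
  rcases le_or_gt e 1 with he' | he'
  · calc cos b ≤ cos (arccos e) := cos_le_cos_of_nonneg_of_le_pi (arccos_nonneg e) hb h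
      _ = e := cos_arccos he he'
  · linarith [cos_le_one b]

lemma le_biSup_of_forall_le {ι : Type*} {f : ι → ℝ} {C : ℝ} (hC : 0 ≤ C) (hf : ∀ i, f i ≤ C)
    {S : Set ι} {i : ι} (hi : i ∈ S) : f i ≤ ⨆ j ∈ S, f j := by
  refine le_ciSup_of_le ⟨C, ?_⟩ i (ciSup_pos (f := fun _ : i ∈ S => f i) hi).ge
  rintro _ ⟨j, rfl⟩
  exact Real.iSup_le (fun _ => hf j) hC

lemma biSup_le_of_forall_le {ι : Type*} {f : ι → ℝ} {C : ℝ} (hC : 0 ≤ C) (hf : ∀ i, f i ≤ C)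
    (S : Set ι) : ⨆ j ∈ S, f j ≤ C :=
  Real.iSup_le (fun j => Real.iSup_le (fun _ => hf j) hC) hC

section MetricSpace

variable {X : Type*} [MetricSpace X]

lemma IsGeodesicSeg.dist_left {γ : ℝ → X} {a b t : ℝ} {x y : X} (h : IsGeodesicSeg γ a b x y)
    (ht : t ∈ Icc a b) : dist x (γ t) = t - a := by
  rw [← h.2.1, h.1 a (left_mem_Icc.2 (ht.1.trans ht.2)) t ht, abs_sub_comm,
    abs_of_nonneg (sub_nonneg.2 ht.1)]

lemma IsGeodesicSeg.dist_right {γ : ℝ → X} {a b t : ℝ} {x y : X} (h : IsGeodesicSeg γ a b x y)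
    (ht : t ∈ Icc a b) : dist (γ t) y = b - t := by
  rw [← h.2.2, h.1 t ht b (right_mem_Icc.2 (ht.1.trans ht.2)), abs_sub_comm,
    abs_of_nonneg (sub_nonneg.2 ht.2)]

lemma IsGeodesicSeg.reverse_restrict {γ : ℝ → X} {L s : ℝ} {x y : X}
    (h : IsGeodesicSeg γ 0 L x y) (hs : s ∈ Icc 0 L) :
    IsGeodesicSeg (fun v => γ (L - v)) 0 (dist y (γ s)) y (γ s) := by
  rw [dist_comm, h.dist_right hs]
  refine ⟨fun a ha b hb => ?_, by simp [h.2.2], by simp⟩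
  rw [h.1 _ ⟨by linarith [ha.2, hs.1], by linarith [ha.1]⟩ _
    ⟨by linarith [hb.2, hs.1], by linarith [hb.1]⟩,
    sub_sub_sub_cancel_left, abs_sub_comm]

lemma compAngle_le_pi (x p q : X) : compAngle x p q ≤ π :=
  arccos_le_pi _

lemma alexAngle_le_pi (x : X) (γ σ : ℝ → X) : alexAngle x γ σ ≤ π := by
  refine ciInf_le_of_le ⟨0, ?_⟩ ⟨1, one_pos⟩ ?_
  · rintro _ ⟨ε, rfl⟩
    exact Real.iSup_nonneg fun _ => Real.iSup_nonneg fun _ =>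
      Real.iSup_nonneg fun _ => Real.iSup_nonneg fun _ => arccos_nonneg _
  · exact biSup_le_of_forall_le pi_pos.le
      (fun _ => biSup_le_of_forall_le pi_pos.le (fun _ => compAngle_le_pi _ _ _) _) _

lemma exists_compAngle_le_of_alexAngle_lt {x : X} {γ σ : ℝ → X} {β : ℝ}
    (h : alexAngle x γ σ < β) :
    ∃ ε > 0, ∀ s ∈ Ioc 0 ε, compAngle x (γ s) (σ s) ≤ β := by
  obtain ⟨⟨ε, hε⟩, hlt⟩ := exists_lt_of_ciInf_lt h
  refine ⟨ε, hε, fun s hs => le_trans ?_ hlt.le⟩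
  calc compAngle x (γ s) (σ s)
      ≤ ⨆ u ∈ Ioc 0 ε, compAngle x (γ s) (σ u) :=
        le_biSup_of_forall_le (f := fun u => compAngle x (γ s) (σ u)) pi_pos.le
          (fun _ => compAngle_le_pi _ _ _) hs
    _ ≤ ⨆ s' ∈ Ioc 0 ε, ⨆ u ∈ Ioc 0 ε, compAngle x (γ s') (σ u) :=
        le_biSup_of_forall_le (f := fun s' => ⨆ u ∈ Ioc 0 ε, compAngle x (γ s') (σ u)) pi_pos.le
          (fun _ => biSup_le_of_forall_le pi_pos.le (fun _ => compAngle_le_pi _ _ _) _) hs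

lemma dist_sq_le_of_compAngle_le {x p q : X} {β : ℝ} (hp : x ≠ p) (hq : x ≠ q) (hβ : β ≤ π)
    (h : compAngle x p q ≤ β) :
    dist p q ^ 2 ≤ dist x p ^ 2 + dist x q ^ 2 - 2 * dist x p * dist x q * cos β := by
  have hpos : 0 < 2 * dist x p * dist x q := by
    have := dist_pos.2 hp; have := dist_pos.2 hq; positivity
  have htri : dist p q ≤ dist x p + dist x q := by
    linarith [dist_triangle p x q, dist_comm p x]
  have hcos := cos_le_of_arccos_le h hβ <| by
    rw [le_div_iff₀ hpos]
    nlinarith [dist_nonneg (x := p) (y := q)]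
  rw [le_div_iff₀ hpos] at hcos
  linarith

lemma one_sub_div_sinc_sq_le_sphAngleCos {s c d : ℝ} (hs : 0 < s) (hsπ : s < π)
    (hd : d ^ 2 ≤ 2 * s ^ 2 * (1 - c)) :
    1 - (1 - c) / sinc s ^ 2 ≤ sphAngleCos s s d := by
  have hsin := sin_pos_of_pos_of_lt_pi hs hsπ
  rw [le_sphAngleCos_iff (mul_pos hsin hsin), sinc_of_ne_zero hs.ne']
  have hlhs : cos s * cos s + sin s * sin s * (1 - (1 - c) / (sin s / s) ^ 2) =
      1 - (1 - c) * s ^ 2 := by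
    field_simp
    linear_combination sin_sq_add_cos_sq s
  rw [hlhs]
  linarith [one_sub_sq_div_two_le_cos (x := d)]

/-- CAT(1) comparison for the triangle `(p, y, γ s)`, read off at `γ u` and written through the
comparison angle at `y`. -/
lemma IsCAT1.dist_le_arccos_sphAngleCos (hcat : IsCAT1 X) {γ : ℝ → X} {x y p : X}
    (hγ : IsGeodesicSeg γ 0 π x y) {s u w : ℝ} (hs : 0 ≤ s) (hsu : s ≤ u) (hu : u ≤ π)
    (hpy : dist p y = π - w) (hper : dist (γ s) p < s + w) :
    dist p (γ u) ≤ arccos (cos u * cos w + sin u * sin w * sphAngleCos s w (dist (γ s) p)) := by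
  have hys : dist y (γ s) = π - s := by rw [dist_comm]; exact hγ.dist_right ⟨hs, hsu.trans hu⟩
  have hcomp := hcat.2 p y (γ s) _ (hγ.reverse_restrict ⟨hs, hsu.trans hu⟩)
    (by rw [hpy, hys]; linarith) (π - u) (by rw [hys]; constructor <;> linarith)
  rw [sub_sub_cancel, hys, hpy] at hcomp
  refine hcomp.trans_eq ?_
  rw [sphCompDist, ← sphAngleCos, sphAngleCos_pi_sub_pi_sub, cos_pi_sub, sin_pi_sub, cos_pi_sub,
    sin_pi_sub]
  ring_nf

/-- Monotonicity of comparison angles at `y`. -/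
lemma IsCAT1.sphAngleCos_le_sphAngleCos (hcat : IsCAT1 X) {γ σ : ℝ → X} {x y : X}
    (hγ : IsGeodesicSeg γ 0 π x y) (hσ : IsGeodesicSeg σ 0 π x y) {s u w : ℝ} (hs : 0 < s)
    (hsu : s ≤ u) (hu : u < π) (hw : 0 < w) (hsw : s + w ≤ π) :
    sphAngleCos s w (dist (γ s) (σ w)) ≤ sphAngleCos u w (dist (γ u) (σ w)) := by
  have hsin_s : 0 < sin s * sin w :=
    mul_pos (sin_pos_of_pos_of_lt_pi hs (by linarith)) (sin_pos_of_pos_of_lt_pi hw (by linarith))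
  have hsin_u : 0 < sin u * sin w :=
    mul_pos (sin_pos_of_pos_of_lt_pi (by linarith) hu) (sin_pos_of_pos_of_lt_pi hw (by linarith))
  have hxs : dist x (γ s) = s := by simpa using hγ.dist_left ⟨hs.le, by linarith⟩
  have hxu : dist x (γ u) = u := by simpa using hγ.dist_left ⟨by linarith, hu.le⟩
  have huy : dist (γ u) y = π - u := hγ.dist_right ⟨by linarith, hu.le⟩
  have hxw : dist x (σ w) = w := by simpa using hσ.dist_left ⟨hw.le, by linarith⟩
  have hwy : dist (σ w) y = π - w := hσ.dist_right ⟨hw.le, by linarith⟩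
  have hd_le : dist (γ s) (σ w) ≤ s + w := by
    linarith [dist_triangle (γ s) x (σ w), dist_comm (γ s) x]
  rcases hd_le.lt_or_eq with hlt | heq
  · have hκ : sphAngleCos s w (dist (γ s) (σ w)) ≤ 1 := by
      rw [sphAngleCos_le_iff hsin_s, mul_one, ← cos_sub, ← cos_abs (s - w)]
      refine cos_le_cos_of_nonneg_of_le_pi (abs_nonneg _) (by linarith) ?_
      simpa [dist_comm, hxs, hxw] using abs_dist_sub_le (γ s) (σ w) x
    have hE : cos u * cos w + sin u * sin w * sphAngleCos s w (dist (γ s) (σ w)) ≤ 1 :=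
      calc _ ≤ cos u * cos w + sin u * sin w * 1 := by gcongr
        _ = cos (u - w) := by rw [cos_sub, mul_one]
        _ ≤ 1 := cos_le_one _
    rw [le_sphAngleCos_iff hsin_u, dist_comm (γ u)]
    exact le_cos_of_le_arccos dist_nonneg
      (hcat.dist_le_arccos_sphAngleCos hγ hs.le hsu hu.le hwy hlt) hE
  · -- perimeter `2π`: the comparison angle at `y` is `π`, the largest possible
    rw [heq, sphAngleCos_add_self hsin_s.ne', le_sphAngleCos_iff hsin_u, mul_neg_one,
      ← sub_eq_add_neg, ← cos_add]
    refine cos_le_cos_of_le_of_le_two_pi_sub dist_nonneg ?_ ?_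
    · linarith [dist_triangle (γ u) x (σ w), dist_comm (γ u) x]
    · linarith [dist_triangle (γ u) y (σ w), dist_comm y (σ w)]

lemma IsCAT1.sphAngleCos_dist_le_sphAngleCos_dist (hcat : IsCAT1 X) {γ₁ γ₂ : ℝ → X} {x y : X}
    (h₁ : IsGeodesicSeg γ₁ 0 π x y) (h₂ : IsGeodesicSeg γ₂ 0 π x y) {s t : ℝ} (hs : 0 < s)
    (hst : s ≤ t) (hstπ : s + t ≤ π) :
    sphAngleCos s s (dist (γ₁ s) (γ₂ s)) ≤ sphAngleCos t t (dist (γ₁ t) (γ₂ t)) :=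
  calc sphAngleCos s s (dist (γ₁ s) (γ₂ s))
      = sphAngleCos s s (dist (γ₂ s) (γ₁ s)) := by rw [dist_comm]
    _ ≤ sphAngleCos t s (dist (γ₂ t) (γ₁ s)) :=
        hcat.sphAngleCos_le_sphAngleCos h₂ h₁ hs hst (by linarith) hs (by linarith)
    _ = sphAngleCos s t (dist (γ₁ s) (γ₂ t)) := by rw [sphAngleCos_comm, dist_comm]
    _ ≤ sphAngleCos t t (dist (γ₁ t) (γ₂ t)) :=
        hcat.sphAngleCos_le_sphAngleCos h₁ h₂ hs hst (by linarith) (by linarith) hstπ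

/-- The cap `min β π` keeps the bound true for `β > π`, where cosine is no longer antitone. -/
lemma IsCAT1.cos_dist_ge_of_alexAngle_lt (hcat : IsCAT1 X) {γ₁ γ₂ : ℝ → X} {x y : X}
    (h₁ : IsGeodesicSeg γ₁ 0 π x y) (h₂ : IsGeodesicSeg γ₂ 0 π x y) {t β : ℝ} (ht : 0 < t)
    (htπ : t < π) (hβ : alexAngle x γ₁ γ₂ < β) :
    cos t ^ 2 + sin t ^ 2 * cos (min β π) ≤ cos (dist (γ₁ t) (γ₂ t)) := by
  obtain ⟨ε, hε, hsmall⟩ := exists_compAngle_le_of_alexAngle_lt hβ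
  set g : ℝ → ℝ := fun s => cos t ^ 2 + sin t ^ 2 * (1 - (1 - cos (min β π)) / sinc s ^ 2)
  have hg : ContinuousAt g 0 :=
    continuousAt_const.add <| continuousAt_const.mul <| continuousAt_const.sub <|
      continuousAt_const.div (continuous_sinc.continuousAt.pow 2) (by simp [sinc_zero])
  have hbound : ∀ s ∈ Ioc 0 (min ε (min t (π - t))), g s ≤ cos (dist (γ₁ t) (γ₂ t)) := by
    rintro s ⟨hs, hsle⟩
    simp only [le_min_iff] at hsle
    obtain ⟨hsε, hst, hstπ⟩ := hsle
    have hxs₁ : dist x (γ₁ s) = s := by simpa using h₁.dist_left ⟨hs.le, by linarith⟩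
    have hxs₂ : dist x (γ₂ s) = s := by simpa using h₂.dist_left ⟨hs.le, by linarith⟩
    have hd := dist_sq_le_of_compAngle_le (dist_pos.1 (hxs₁.symm ▸ hs))
      (dist_pos.1 (hxs₂.symm ▸ hs)) (min_le_right β π)
      (le_min (hsmall s ⟨hs, hsε⟩) (compAngle_le_pi _ _ _))
    rw [hxs₁, hxs₂] at hd
    have hκ := (one_sub_div_sinc_sq_le_sphAngleCos hs (by linarith) (by linarith)).trans
      (hcat.sphAngleCos_dist_le_sphAngleCos_dist h₁ h₂ hs hst (by linarith))
    have hsint := sin_pos_of_pos_of_lt_pi ht htπ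
    simpa only [g, sq] using (le_sphAngleCos_iff (mul_pos hsint hsint)).1 hκ
  have hlim := le_of_tendsto (hg.tendsto.mono_left nhdsWithin_le_nhds)
    (eventually_of_mem (Ioc_mem_nhdsGT (by positivity : 0 < min ε (min t (π - t)))) hbound)
  simpa [g, sinc_zero] using hlim

lemma IsCAT1.cos_dist_ge (hcat : IsCAT1 X) {γ₁ γ₂ : ℝ → X} {x y : X}
    (h₁ : IsGeodesicSeg γ₁ 0 π x y) (h₂ : IsGeodesicSeg γ₂ 0 π x y) {t : ℝ} (ht : 0 < t)
    (htπ : t < π) :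
    cos t ^ 2 + sin t ^ 2 * cos (alexAngle x γ₁ γ₂) ≤ cos (dist (γ₁ t) (γ₂ t)) := by
  have hf : ContinuousAt (fun β => cos t ^ 2 + sin t ^ 2 * cos (min β π))
      (alexAngle x γ₁ γ₂) := by
    fun_prop
  have hlim := le_of_tendsto (hf.tendsto.mono_left nhdsWithin_le_nhds)
    (eventually_nhdsWithin_of_forall (s := Ioi (alexAngle x γ₁ γ₂))
      fun _ hβ => hcat.cos_dist_ge_of_alexAngle_lt h₁ h₂ ht htπ hβ)
  simpa [min_eq_left (alexAngle_le_pi x γ₁ γ₂)] using hlim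

end MetricSpace

theorem digon_comparison_general
    {X : Type*} [MetricSpace X] (hcat : IsCAT1 X)
    (x y : X)
    (γ₁ γ₂ : ℝ → X) (h₁ : IsGeodesicSeg γ₁ 0 π x y) (h₂ : IsGeodesicSeg γ₂ 0 π x y)
    (α : ℝ) (hα : alexAngle x γ₁ γ₂ = α) :
    ∀ t ∈ Set.Icc (0:ℝ) π, dist (γ₁ t) (γ₂ t) ≤ digonDist α t := by
  rintro t ⟨ht, htπ⟩
  subst hα
  rcases ht.eq_or_lt with rfl | ht
  · rw [h₁.2.1, h₂.2.1, dist_self]; exact arccos_nonneg _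
  rcases htπ.eq_or_lt with rfl | htπ
  · rw [h₁.2.2, h₂.2.2, dist_self]; exact arccos_nonneg _
  have hDπ : dist (γ₁ t) (γ₂ t) ≤ π := by
    have h₁x := h₁.dist_left ⟨ht.le, htπ.le⟩
    have h₂x := h₂.dist_left ⟨ht.le, htπ.le⟩
    have h₁y := h₁.dist_right ⟨ht.le, htπ.le⟩
    have h₂y := h₂.dist_right ⟨ht.le, htπ.le⟩
    linarith [dist_triangle (γ₁ t) x (γ₂ t), dist_triangle (γ₁ t) y (γ₂ t), dist_comm (γ₁ t) x,
      dist_comm y (γ₂ t)]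
  calc dist (γ₁ t) (γ₂ t) = arccos (cos (dist (γ₁ t) (γ₂ t))) :=
        (arccos_cos dist_nonneg hDπ).symm
    _ ≤ digonDist (alexAngle x γ₁ γ₂) t := arccos_le_arccos (hcat.cos_dist_ge h₁ h₂ ht htπ)

/-- In a CAT(1) space, two unit-speed geodesics of length π from `x` to `y`
making Alexandrov angle `α` at `x` satisfy the spherical digon comparison inequality. -/
theorem digon_comparison
    {X : Type*} [MetricSpace X] (hcat : IsCAT1 X)
    (x y : X) (hxy : dist x y = π)
    (γ₁ γ₂ : ℝ → X) (h₁ : IsGeodesicSeg γ₁ 0 π x y) (h₂ : IsGeodesicSeg γ₂ 0 π x y)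
    (α : ℝ) (hα : alexAngle x γ₁ γ₂ = α) :
    ∀ t ∈ Set.Icc (0:ℝ) π, dist (γ₁ t) (γ₂ t) ≤ digonDist α t :=
  digon_comparison_general hcat x y γ₁ γ₂ h₁ h₂ α hα
end
end

section
/- Let Y be a union of affine hyperplanes in ℝⁿ that is closed (as a set), locally a finite union of hyperplanes, and locally invariant under reflections: for every point p and every two hyperplanes H₁, H₂ of Y through p, the reflection of H₁ across H₂ agrees with a hyperplane of Y near p. Then the family of hyperplanes of Y is globally invariant under reflection across any of its non-parallel members: if H₁, H₂ ∈ Y are not parallel, the reflection of H₁ across H₂ is again a hyperplane of Y. -/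
open Real Set Metric

noncomputable section

/-- The affine hyperplane with unit normal `h.1` and offset `h.2`. -/
def hypPlane {n : ℕ} (h : EuclideanSpace ℝ (Fin n) × ℝ) : Set (EuclideanSpace ℝ (Fin n)) :=
  {x | (inner ℝ h.1 x : ℝ) = h.2}

/-- Reflection across the affine hyperplane with unit normal `h.1` and offset `h.2`. -/
def hypRefl {n : ℕ} (h : EuclideanSpace ℝ (Fin n) × ℝ) (x : EuclideanSpace ℝ (Fin n)) :
    EuclideanSpace ℝ (Fin n) :=
  x - (2 * ((inner ℝ h.1 x : ℝ) - h.2)) • h.1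

/-! Two non-parallel hyperplanes `H₁`, `H₂` meet in a point `p`. Local invariance at `p` yields a
hyperplane `H₃` of the family agreeing with the reflection of `H₁` across `H₂` on a ball around
`p`. The reflected hyperplane also passes through `p`, and two hyperplanes through `p` that agree
near `p` coincide, because each is the union of the lines through `p` that it contains. -/

section Hyperplanes

variable {n : ℕ}

lemma hypRefl_apply_of_mem {h : EuclideanSpace ℝ (Fin n) × ℝ} {p : EuclideanSpace ℝ (Fin n)}
    (hp : p ∈ hypPlane h) : hypRefl h p = p := by
  simp [hypRefl, show inner ℝ h.1 p = h.2 from hp]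

lemma inner_hypRefl {h : EuclideanSpace ℝ (Fin n) × ℝ} (hu : ‖h.1‖ = 1)
    (x : EuclideanSpace ℝ (Fin n)) :
    inner ℝ h.1 (hypRefl h x) = 2 * h.2 - inner ℝ h.1 x := by
  rw [hypRefl, inner_sub_right, real_inner_smul_right, real_inner_self_eq_norm_sq, hu]
  ring

lemma hypRefl_involutive {h : EuclideanSpace ℝ (Fin n) × ℝ} (hu : ‖h.1‖ = 1) :
    Function.Involutive (hypRefl h) := by
  intro x
  rw [hypRefl, inner_hypRefl hu, hypRefl]
  module

lemma hypRefl_image_hypPlane (h₁ : EuclideanSpace ℝ (Fin n) × ℝ)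
    {h₂ : EuclideanSpace ℝ (Fin n) × ℝ} (hu : ‖h₂.1‖ = 1) :
    hypRefl h₂ '' hypPlane h₁ =
      hypPlane (h₁.1 - (2 * inner ℝ h₁.1 h₂.1) • h₂.1, h₁.2 - 2 * h₂.2 * inner ℝ h₁.1 h₂.1) := by
  rw [(hypRefl_involutive hu).image_eq_preimage_symm]
  ext x
  simp only [Set.mem_preimage, hypPlane, Set.mem_ofPred_eq, hypRefl, inner_sub_left,
    inner_sub_right, real_inner_smul_left, real_inner_smul_right, real_inner_comm h₂.1 h₁.1]
  constructor <;> intro hx <;> linarith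

lemma hypPlane_inter_hypPlane_nonempty {h₁ h₂ : EuclideanSpace ℝ (Fin n) × ℝ}
    (hu₁ : ‖h₁.1‖ = 1) (hu₂ : ‖h₂.1‖ = 1) (hpar : ¬ (h₁.1 = h₂.1 ∨ h₁.1 = -h₂.1)) :
    (hypPlane h₁ ∩ hypPlane h₂).Nonempty := by
  set c : ℝ := inner ℝ h₁.1 h₂.1 with hc
  have hdet : 1 - c ^ 2 ≠ 0 := by
    have hc₁ : c ≠ 1 := fun h ↦ hpar (.inl ((inner_eq_one_iff_of_norm_eq_one hu₁ hu₂).1 h))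
    have hc₂ : c ≠ -1 := fun h ↦ hpar (.inr ((inner_eq_neg_one_iff_of_norm_eq_one hu₁ hu₂).1 h))
    rw [show 1 - c ^ 2 = (1 - c) * (1 + c) by ring]
    exact mul_ne_zero (sub_ne_zero.2 hc₁.symm) fun h ↦ hc₂ (by linarith)
  -- the point of `span {h₁.1, h₂.1}` solving the 2 × 2 Gram system
  refine ⟨((h₁.2 - c * h₂.2) / (1 - c ^ 2)) • h₁.1 + ((h₂.2 - c * h₁.2) / (1 - c ^ 2)) • h₂.1,
    ?_, ?_⟩ <;>
  · simp only [hypPlane, Set.mem_ofPred_eq, inner_add_right, real_inner_smul_right,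
      real_inner_self_eq_norm_sq, hu₁, hu₂, ← hc, real_inner_comm h₁.1 h₂.1]
    field_simp
    ring

lemma mem_hypPlane_iff_inner_sub {h : EuclideanSpace ℝ (Fin n) × ℝ}
    {p : EuclideanSpace ℝ (Fin n)} (hp : p ∈ hypPlane h) (x : EuclideanSpace ℝ (Fin n)) :
    x ∈ hypPlane h ↔ inner ℝ h.1 (x - p) = 0 := by
  rw [inner_sub_right, show inner ℝ h.1 p = h.2 from hp, sub_eq_zero]
  rfl

lemma hypPlane_eq_of_inter_ball_eq {h h' : EuclideanSpace ℝ (Fin n) × ℝ}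
    {p : EuclideanSpace ℝ (Fin n)} {ε : ℝ} (hε : 0 < ε) (hp : p ∈ hypPlane h)
    (heq : hypPlane h ∩ ball p ε = hypPlane h' ∩ ball p ε) :
    hypPlane h = hypPlane h' := by
  have hp' : p ∈ hypPlane h' := (heq ▸ ⟨hp, mem_ball_self hε⟩ : p ∈ hypPlane h' ∩ ball p ε).1
  ext x
  -- both hyperplanes are cones with apex `p`, so `x` may be pulled into the ball
  obtain ⟨t, ht, hy⟩ : ∃ t : ℝ, 0 < t ∧ p + t • (x - p) ∈ ball p ε := by
    refine ⟨ε / (‖x - p‖ + ε), by positivity, ?_⟩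
    rw [mem_ball, dist_eq_norm, add_sub_cancel_left, norm_smul, Real.norm_of_nonneg (by positivity),
      div_mul_eq_mul_div, div_lt_iff₀ (by positivity)]
    nlinarith
  have hscale : ∀ k : EuclideanSpace ℝ (Fin n) × ℝ, p ∈ hypPlane k →
      (x ∈ hypPlane k ↔ p + t • (x - p) ∈ hypPlane k) := fun k hk ↦ by
    rw [mem_hypPlane_iff_inner_sub hk, mem_hypPlane_iff_inner_sub hk, add_sub_cancel_left,
      real_inner_smul_right, mul_eq_zero, or_iff_right ht.ne']
  have hball := Set.ext_iff.1 heq (p + t • (x - p))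
  rw [Set.mem_inter_iff, Set.mem_inter_iff, and_iff_left hy, and_iff_left hy] at hball
  rw [hscale h hp, hscale h' hp', hball]

end Hyperplanes

theorem locally_reflective_arrangement_is_reflective_general
    (n : ℕ) (𝓗 : Set (EuclideanSpace ℝ (Fin n) × ℝ))
    (hunit : ∀ h ∈ 𝓗, ‖h.1‖ = 1)
    (hlocinv : ∀ p : EuclideanSpace ℝ (Fin n), ∃ ε > 0,
      ∀ h₂ ∈ 𝓗, p ∈ hypPlane h₂ →
        ∀ h₁ ∈ 𝓗, (hypPlane h₁ ∩ Metric.ball p ε).Nonempty →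
          ∃ h₃ ∈ 𝓗, hypRefl h₂ '' hypPlane h₁ ∩ Metric.ball p ε =
            hypPlane h₃ ∩ Metric.ball p ε) :
    ∀ h₁ ∈ 𝓗, ∀ h₂ ∈ 𝓗, ¬ (h₁.1 = h₂.1 ∨ h₁.1 = -h₂.1) →
      ∃ h₃ ∈ 𝓗, hypRefl h₂ '' hypPlane h₁ = hypPlane h₃ := by
  intro h₁ hh₁ h₂ hh₂ hpar
  obtain ⟨p, hp₁, hp₂⟩ := hypPlane_inter_hypPlane_nonempty (hunit h₁ hh₁) (hunit h₂ hh₂) hpar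
  obtain ⟨ε, hε, hinv⟩ := hlocinv p
  obtain ⟨h₃, hh₃, heq⟩ := hinv h₂ hh₂ hp₂ h₁ hh₁ ⟨p, hp₁, mem_ball_self hε⟩
  have hp : p ∈ hypRefl h₂ '' hypPlane h₁ := ⟨p, hp₁, hypRefl_apply_of_mem hp₂⟩
  rw [hypRefl_image_hypPlane h₁ (hunit h₂ hh₂)] at hp heq ⊢
  exact ⟨h₃, hh₃, hypPlane_eq_of_inter_ball_eq hε hp heq⟩

/-- A closed, locally finite union of affine hyperplanes in ℝⁿ which is
locally invariant under reflections is globally invariant under reflection across any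
of its members in any non-parallel member. -/
theorem locally_reflective_arrangement_is_reflective
    (n : ℕ) (𝓗 : Set (EuclideanSpace ℝ (Fin n) × ℝ))
    (hunit : ∀ h ∈ 𝓗, ‖h.1‖ = 1)
    (hclosed : IsClosed (⋃ h ∈ 𝓗, hypPlane h))
    (hlocfin : ∀ p : EuclideanSpace ℝ (Fin n), ∃ ε > 0,
      {h ∈ 𝓗 | (hypPlane h ∩ Metric.ball p ε).Nonempty}.Finite)
    (hlocinv : ∀ p : EuclideanSpace ℝ (Fin n), ∃ ε > 0,
      ∀ h₂ ∈ 𝓗, p ∈ hypPlane h₂ →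
        ∀ h₁ ∈ 𝓗, (hypPlane h₁ ∩ Metric.ball p ε).Nonempty →
          ∃ h₃ ∈ 𝓗, hypRefl h₂ '' hypPlane h₁ ∩ Metric.ball p ε =
            hypPlane h₃ ∩ Metric.ball p ε) :
    ∀ h₁ ∈ 𝓗, ∀ h₂ ∈ 𝓗, ¬ (h₁.1 = h₂.1 ∨ h₁.1 = -h₂.1) →
      ∃ h₃ ∈ 𝓗, hypRefl h₂ '' hypPlane h₁ = hypPlane h₃ :=
  locally_reflective_arrangement_is_reflective_general n 𝓗 hunit hlocinv
end
end
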